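/- Let Q ∈ ℝ^{n×m}, Θ ∈ ℝ^{k×n}, S ∈ ℝ^{k×m} with ‖ΘQ − S‖ ≤ F. Then σ_min(S) − F ≤ σ_min(ΘQ) ≤ σ_max(ΘQ) ≤ σ_max(S) + F. If additionally Θ is an ε-embedding for Q (ε < 1) and Δ = ‖I − SᵀS‖_F, then (1+ε)^{-1/2}(1 − Δ − F) ≤ σ_min(Q) ≤ σ_max(Q) ≤ (1−ε)^{-1/2}(1 + Δ + F). -/

import Mathlib

open Matrix

/-- Euclidean (ℓ₂) norm of a vector. -/
noncomputable def enorm {n : ℕ} (v : Fin n → ℝ) : ℝ := Real.sqrt (v ⬝ᵥ v)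

/-- Smallest singular value: infimum of ‖A x‖ over unit vectors x. -/
noncomputable def smin {k m : ℕ} (A : Matrix (Fin k) (Fin m) ℝ) : ℝ :=
  sInf ((fun x => _root_.enorm (A.mulVec x)) '' {x | _root_.enorm x = 1})

/-- Largest singular value (spectral norm): supremum of ‖A x‖ over unit vectors x. -/
noncomputable def smax {k m : ℕ} (A : Matrix (Fin k) (Fin m) ℝ) : ℝ :=
  sSup ((fun x => _root_.enorm (A.mulVec x)) '' {x | _root_.enorm x = 1})

/-- Frobenius norm. -/
noncomputable def frob {k m : ℕ} (A : Matrix (Fin k) (Fin m) ℝ) : ℝ :=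
  Real.sqrt (∑ i, ∑ j, (A i j) ^ 2)

/-!
Both singular values are extremes of `‖A x‖` over the unit sphere, so every bound is proved for a
fixed unit vector `x`. The reverse triangle inequality gives `|‖ΘQx‖ - ‖Sx‖| ≤ ‖(ΘQ - S)x‖ ≤ F`;
since `‖Sx‖² - 1 = -⟪x, (I - SᵀS)x⟫`, the number `‖Sx‖` lies in `[1 - Δ, 1 + Δ]`; and the
ε-embedding property with `a = b = x` gives `(1 - ε)‖Qx‖² ≤ ‖ΘQx‖² ≤ (1 + ε)‖Qx‖²`.
-/

lemma enorm_nonneg {n : ℕ} (v : Fin n → ℝ) : 0 ≤ _root_.enorm v := Real.sqrt_nonneg _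

lemma enorm_mul_self {n : ℕ} (v : Fin n → ℝ) : _root_.enorm v * _root_.enorm v = v ⬝ᵥ v :=
  Real.mul_self_sqrt (by simpa using dotProduct_star_self_nonneg v)

lemma enorm_eq_norm_toLp {n : ℕ} (v : Fin n → ℝ) : _root_.enorm v = ‖WithLp.toLp 2 v‖ := by
  simp [EuclideanSpace.norm_eq, _root_.enorm, dotProduct, sq]

lemma abs_dotProduct_le_enorm_mul_enorm {n : ℕ} (v w : Fin n → ℝ) :
    |v ⬝ᵥ w| ≤ _root_.enorm v * _root_.enorm w := by
  simpa [enorm_eq_norm_toLp, EuclideanSpace.inner_eq_star_dotProduct, dotProduct_comm w]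
    using abs_real_inner_le_norm (WithLp.toLp 2 v) (WithLp.toLp 2 w)

lemma abs_enorm_sub_enorm_le {n : ℕ} (v w : Fin n → ℝ) :
    |_root_.enorm v - _root_.enorm w| ≤ _root_.enorm (v - w) := by
  simpa only [enorm_eq_norm_toLp, WithLp.toLp_sub] using abs_norm_sub_norm_le _ _

lemma exists_enorm_eq_one {m : ℕ} (hm : 0 < m) : ∃ x : Fin m → ℝ, _root_.enorm x = 1 :=
  ⟨Pi.single ⟨0, hm⟩ 1, by simp [_root_.enorm]⟩

lemma frob_nonneg {k m : ℕ} (A : Matrix (Fin k) (Fin m) ℝ) : 0 ≤ frob A := Real.sqrt_nonneg _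

lemma enorm_mulVec_le_frob_mul {k m : ℕ} (A : Matrix (Fin k) (Fin m) ℝ) (x : Fin m → ℝ) :
    _root_.enorm (A *ᵥ x) ≤ frob A * _root_.enorm x := by
  rw [_root_.enorm, frob, _root_.enorm, ← Real.sqrt_mul (by positivity)]
  refine Real.sqrt_le_sqrt ?_
  simp only [dotProduct, mulVec, ← sq]
  rw [Finset.sum_mul]
  exact Finset.sum_le_sum fun i _ => Finset.sum_mul_sq_le_sq_mul_sq _ (A i) x

section SingularValues

variable {k m : ℕ} (A : Matrix (Fin k) (Fin m) ℝ)

lemma bddAbove_enorm_mulVec_sphere :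
    BddAbove ((fun x => _root_.enorm (A *ᵥ x)) '' {x | _root_.enorm x = 1}) := by
  refine ⟨frob A, ?_⟩
  rintro _ ⟨x, hx : _root_.enorm x = 1, rfl⟩
  simpa only [hx, mul_one] using enorm_mulVec_le_frob_mul A x

lemma bddBelow_enorm_mulVec_sphere :
    BddBelow ((fun x => _root_.enorm (A *ᵥ x)) '' {x | _root_.enorm x = 1}) :=
  ⟨0, by rintro _ ⟨x, -, rfl⟩; exact enorm_nonneg _⟩

lemma enorm_mulVec_le_smax {x : Fin m → ℝ} (hx : _root_.enorm x = 1) :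
    _root_.enorm (A *ᵥ x) ≤ smax A :=
  le_csSup (bddAbove_enorm_mulVec_sphere A) ⟨x, hx, rfl⟩

lemma smin_le_enorm_mulVec {x : Fin m → ℝ} (hx : _root_.enorm x = 1) :
    smin A ≤ _root_.enorm (A *ᵥ x) :=
  csInf_le (bddBelow_enorm_mulVec_sphere A) ⟨x, hx, rfl⟩

variable {A}

lemma smax_le (hm : 0 < m) {c : ℝ} (h : ∀ x, _root_.enorm x = 1 → _root_.enorm (A *ᵥ x) ≤ c) : smax A ≤ c := by
  obtain ⟨x, hx⟩ := exists_enorm_eq_one hm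
  exact csSup_le ⟨_, x, hx, rfl⟩ (by rintro _ ⟨x, hx, rfl⟩; exact h x hx)

lemma le_smin (hm : 0 < m) {c : ℝ} (h : ∀ x, _root_.enorm x = 1 → c ≤ _root_.enorm (A *ᵥ x)) : c ≤ smin A := by
  obtain ⟨x, hx⟩ := exists_enorm_eq_one hm
  exact le_csInf ⟨_, x, hx, rfl⟩ (by rintro _ ⟨x, hx, rfl⟩; exact h x hx)

lemma smin_le_smax (hm : 0 < m) : smin A ≤ smax A := by
  obtain ⟨x, hx⟩ := exists_enorm_eq_one hm
  exact (smin_le_enorm_mulVec A hx).trans (enorm_mulVec_le_smax A hx)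

end SingularValues

lemma abs_enorm_mulVec_sub_enorm_mulVec_le_smax_sub {k m : ℕ} (A B : Matrix (Fin k) (Fin m) ℝ)
    {x : Fin m → ℝ} (hx : _root_.enorm x = 1) :
    |_root_.enorm (A *ᵥ x) - _root_.enorm (B *ᵥ x)| ≤ smax (A - B) :=
  (abs_enorm_sub_enorm_le _ _).trans (by rw [← sub_mulVec]; exact enorm_mulVec_le_smax _ hx)

lemma smin_sub_smax_sub_le_smin {k m : ℕ} (hm : 0 < m) (A B : Matrix (Fin k) (Fin m) ℝ) :
    smin B - smax (A - B) ≤ smin A :=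
  le_smin hm fun x hx => by
    linarith [smin_le_enorm_mulVec B hx,
      (abs_le.mp (abs_enorm_mulVec_sub_enorm_mulVec_le_smax_sub A B hx)).1]

lemma smax_le_smax_add_smax_sub {k m : ℕ} (hm : 0 < m) (A B : Matrix (Fin k) (Fin m) ℝ) :
    smax A ≤ smax B + smax (A - B) :=
  smax_le hm fun x hx => by
    linarith [enorm_mulVec_le_smax B hx,
      (abs_le.mp (abs_enorm_mulVec_sub_enorm_mulVec_le_smax_sub A B hx)).2]

lemma abs_enorm_mulVec_mul_self_sub_one_le {k m : ℕ} (S : Matrix (Fin k) (Fin m) ℝ)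
    {x : Fin m → ℝ} (hx : _root_.enorm x = 1) :
    |_root_.enorm (S *ᵥ x) * _root_.enorm (S *ᵥ x) - 1| ≤ frob (1 - Sᵀ * S) := by
  have hSx : S *ᵥ x ⬝ᵥ S *ᵥ x = x ⬝ᵥ (Sᵀ * S) *ᵥ x := by
    rw [← mulVec_mulVec, mulVec_transpose, dotProduct_comm x, ← dotProduct_mulVec]
  have hxx : x ⬝ᵥ x = 1 := by rw [← enorm_mul_self, hx, one_mul]
  calc |_root_.enorm (S *ᵥ x) * _root_.enorm (S *ᵥ x) - 1|
      = |x ⬝ᵥ (1 - Sᵀ * S) *ᵥ x| := by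
        rw [enorm_mul_self, hSx, sub_mulVec, one_mulVec, dotProduct_sub, hxx, abs_sub_comm]
    _ ≤ _root_.enorm x * _root_.enorm ((1 - Sᵀ * S) *ᵥ x) := abs_dotProduct_le_enorm_mul_enorm _ _
    _ ≤ frob (1 - Sᵀ * S) := by
        simpa only [hx, one_mul, mul_one] using enorm_mulVec_le_frob_mul (1 - Sᵀ * S) x

lemma one_sub_frob_le_smin {k m : ℕ} (hm : 0 < m) (S : Matrix (Fin k) (Fin m) ℝ) :
    1 - frob (1 - Sᵀ * S) ≤ smin S :=
  le_smin hm fun x hx => by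
    have h := abs_le.mp (abs_enorm_mulVec_mul_self_sub_one_le S hx)
    nlinarith [enorm_nonneg (S *ᵥ x), frob_nonneg (1 - Sᵀ * S)]

lemma smax_le_one_add_frob {k m : ℕ} (hm : 0 < m) (S : Matrix (Fin k) (Fin m) ℝ) :
    smax S ≤ 1 + frob (1 - Sᵀ * S) :=
  smax_le hm fun x hx => by
    have h := abs_le.mp (abs_enorm_mulVec_mul_self_sub_one_le S hx)
    nlinarith [enorm_nonneg (S *ᵥ x), frob_nonneg (1 - Sᵀ * S)]

section Embedding

variable {k n : ℕ} {Θ : Matrix (Fin k) (Fin n) ℝ} {ε : ℝ} {y : Fin n → ℝ}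

lemma enorm_mulVec_le_sqrt_one_add_mul
    (h : |y ⬝ᵥ y - Θ *ᵥ y ⬝ᵥ Θ *ᵥ y| ≤ ε * _root_.enorm y * _root_.enorm y) :
    _root_.enorm (Θ *ᵥ y) ≤ √(1 + ε) * _root_.enorm y := by
  rw [mul_assoc, enorm_mul_self] at h
  have hy : 0 ≤ y ⬝ᵥ y := enorm_mul_self y ▸ mul_self_nonneg _
  rw [_root_.enorm, _root_.enorm, ← Real.sqrt_mul' _ hy]
  exact Real.sqrt_le_sqrt (by linarith [(abs_le.mp h).1])

lemma sqrt_one_sub_mul_le_enorm_mulVec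
    (h : |y ⬝ᵥ y - Θ *ᵥ y ⬝ᵥ Θ *ᵥ y| ≤ ε * _root_.enorm y * _root_.enorm y) :
    √(1 - ε) * _root_.enorm y ≤ _root_.enorm (Θ *ᵥ y) := by
  rw [mul_assoc, enorm_mul_self] at h
  have hy : 0 ≤ y ⬝ᵥ y := enorm_mul_self y ▸ mul_self_nonneg _
  rw [_root_.enorm, _root_.enorm, ← Real.sqrt_mul' _ hy]
  exact Real.sqrt_le_sqrt (by linarith [(abs_le.mp h).2])

variable {m : ℕ} {Q : Matrix (Fin n) (Fin m) ℝ}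

lemma inv_sqrt_one_add_mul_smin_mul_le (hm : 0 < m)
    (hemb : ∀ x, |Q *ᵥ x ⬝ᵥ Q *ᵥ x - Θ *ᵥ (Q *ᵥ x) ⬝ᵥ Θ *ᵥ (Q *ᵥ x)|
      ≤ ε * _root_.enorm (Q *ᵥ x) * _root_.enorm (Q *ᵥ x)) :
    (√(1 + ε))⁻¹ * smin (Θ * Q) ≤ smin Q :=
  le_smin hm fun x hx => inv_mul_le_of_le_mul₀ (Real.sqrt_nonneg _) (enorm_nonneg _) <|
    calc smin (Θ * Q) ≤ _root_.enorm ((Θ * Q) *ᵥ x) := smin_le_enorm_mulVec _ hx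
      _ = _root_.enorm (Θ *ᵥ (Q *ᵥ x)) := by rw [mulVec_mulVec]
      _ ≤ √(1 + ε) * _root_.enorm (Q *ᵥ x) := enorm_mulVec_le_sqrt_one_add_mul (hemb x)

lemma smax_le_inv_sqrt_one_sub_mul_smax_mul (hm : 0 < m) (hε : ε < 1)
    (hemb : ∀ x, |Q *ᵥ x ⬝ᵥ Q *ᵥ x - Θ *ᵥ (Q *ᵥ x) ⬝ᵥ Θ *ᵥ (Q *ᵥ x)|
      ≤ ε * _root_.enorm (Q *ᵥ x) * _root_.enorm (Q *ᵥ x)) :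
    smax Q ≤ (√(1 - ε))⁻¹ * smax (Θ * Q) :=
  smax_le hm fun x hx => (le_inv_mul_iff₀ (Real.sqrt_pos.2 (sub_pos.2 hε))).2 <|
    calc √(1 - ε) * _root_.enorm (Q *ᵥ x) ≤ _root_.enorm (Θ *ᵥ (Q *ᵥ x)) :=
          sqrt_one_sub_mul_le_enorm_mulVec (hemb x)
      _ = _root_.enorm ((Θ * Q) *ᵥ x) := by rw [mulVec_mulVec]
      _ ≤ smax (Θ * Q) := enorm_mulVec_le_smax _ hx

end Embedding

/-- Perturbation and ε-embedding bounds on the singular values of Q via its sketch S. -/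
theorem singular_values_via_sketch_perturbation {n m k : ℕ} (hm : 0 < m)
    (Q : Matrix (Fin n) (Fin m) ℝ) (Θ : Matrix (Fin k) (Fin n) ℝ)
    (S : Matrix (Fin k) (Fin m) ℝ) (F ε Δ : ℝ)
    (hF : smax (Θ * Q - S) ≤ F) (hε : ε < 1)
    (hemb : ∀ a b : Fin m → ℝ,
      |(Q.mulVec a) ⬝ᵥ (Q.mulVec b) - (Θ.mulVec (Q.mulVec a)) ⬝ᵥ (Θ.mulVec (Q.mulVec b))|
        ≤ ε * _root_.enorm (Q.mulVec a) * _root_.enorm (Q.mulVec b))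
    (hΔ : Δ = frob (1 - Sᵀ * S)) :
    (smin S - F ≤ smin (Θ * Q) ∧ smax (Θ * Q) ≤ smax S + F) ∧
      ((Real.sqrt (1 + ε))⁻¹ * (1 - Δ - F) ≤ smin Q ∧ smin Q ≤ smax Q ∧
        smax Q ≤ (Real.sqrt (1 - ε))⁻¹ * (1 + Δ + F)) := by
  subst hΔ
  have hemb' := fun x => hemb x x
  have hweyl_min := smin_sub_smax_sub_le_smin hm (Θ * Q) S
  have hweyl_max := smax_le_smax_add_smax_sub hm (Θ * Q) S
  have hS_min := one_sub_frob_le_smin hm S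
  have hS_max := smax_le_one_add_frob hm S
  refine ⟨⟨by linarith, by linarith⟩, ?_, smin_le_smax hm, ?_⟩
  · calc (√(1 + ε))⁻¹ * (1 - frob (1 - Sᵀ * S) - F) ≤ (√(1 + ε))⁻¹ * smin (Θ * Q) := by
          gcongr; linarith
      _ ≤ smin Q := inv_sqrt_one_add_mul_smin_mul_le hm hemb'
  · calc smax Q ≤ (√(1 - ε))⁻¹ * smax (Θ * Q) := smax_le_inv_sqrt_one_sub_mul_smax_mul hm hε hemb'
      _ ≤ (√(1 - ε))⁻¹ * (1 + frob (1 - Sᵀ * S) + F) := by gcongr; linarith
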